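/- Let m : I × J → ℝ be strictly increasing in each variable, x₁ < x₂ in I, y₁ < y₂ in J, and let μ, ν be probability measures on I and J respectively with supp μ ⊂ [x₁, x₂] and supp ν ⊂ [y₁, y₂]. If ∫ m(x, y₂) dμ(x) = ∫ m(x₁, y) dν(y) and m(x₁, y₂) ≤ both quantities, then μ = δ_{x₁} and ν = δ_{y₂}. -/
import Mathlib

open Real Set MeasureTheory

/-- The topological support of a measure on ℝ. -/
def msupp (μ : Measure ℝ) : Set ℝ := {x | ∀ U ∈ nhds x, μ U ≠ 0}

lemma compl_msupp_null (μ : Measure ℝ) : μ (msupp μ)ᶜ = 0 := by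
  apply measure_null_of_locally_null
  intro x hx
  simp only [msupp, mem_compl_iff, mem_setOf_eq, not_forall] at hx
  obtain ⟨U, hU, hU0⟩ := hx
  push_neg at hU0
  exact ⟨U, nhdsWithin_le_nhds hU, hU0⟩

lemma ae_mem_of_msupp_subset {μ : Measure ℝ} {s : Set ℝ} (h : msupp μ ⊆ s) :
    ∀ᵐ x ∂μ, x ∈ s := by
  have : μ sᶜ = 0 :=
    measure_mono_null (compl_subset_compl.2 h) (compl_msupp_null μ)
  filter_upwards [measure_eq_zero_iff_ae_notMem.mp this] with x hx using not_not.mp hx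

lemma prob_eq_dirac (μ : Measure ℝ) (h : IsProbabilityMeasure μ) (a : ℝ)
    (hae : ∀ᵐ x ∂μ, x = a) : μ = Measure.dirac a := by
  have hc : μ {a}ᶜ = 0 := by
    have h0 := ae_iff.mp hae
    have : {x : ℝ | ¬ x = a} = {a}ᶜ := by ext x; simp
    rwa [this] at h0
  have key : ∀ s : Set ℝ, μ s = μ (s ∩ {a}) := by
    intro s
    have h1 : μ (s \ {a}) = 0 := measure_mono_null (diff_subset_compl s {a}) hc
    have h2 := measure_inter_add_diff (μ := μ) s (measurableSet_singleton a)
    rw [h1, add_zero] at h2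
    exact h2.symm
  have ha : μ {a} = 1 := by
    have := key univ
    rw [univ_inter] at this
    rw [← this, measure_univ]
  ext s hs
  rw [Measure.dirac_apply' _ hs, key s]
  by_cases has : a ∈ s
  · rw [inter_eq_right.mpr (singleton_subset_iff.mpr has)]
    simp [ha, indicator_of_mem has]
  · rw [inter_singleton_eq_empty.mpr has]
    simp [indicator_of_notMem has]

/-- Rigidity step: equality in the monotonicity chain of inequalities forces the
probability measures to be Dirac masses at the extreme points. -/
theorem stmt_16 (x₁ x₂ y₁ y₂ : ℝ) (hx : x₁ < x₂) (hy : y₁ < y₂)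
    (m : ℝ → ℝ → ℝ)
    (hm_cont : Continuous fun p : ℝ × ℝ => m p.1 p.2)
    (hm_monox : ∀ y, StrictMonoOn (fun x => m x y) (Icc x₁ x₂))
    (hm_monoy : ∀ x, StrictMonoOn (m x) (Icc y₁ y₂))
    (μ ν : Measure ℝ) (hμ : IsProbabilityMeasure μ) (hν : IsProbabilityMeasure ν)
    (hμ_supp : msupp μ ⊆ Icc x₁ x₂) (hν_supp : msupp ν ⊆ Icc y₁ y₂)
    (hμ_int : Integrable (fun x => m x y₂) μ) (hν_int : Integrable (m x₁) ν)
    (heq : ∫ x, m x y₂ ∂μ = ∫ y, m x₁ y ∂ν)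
    (hle₁ : m x₁ y₂ ≤ ∫ x, m x y₂ ∂μ) (hle₂ : m x₁ y₂ ≤ ∫ y, m x₁ y ∂ν) :
    μ = Measure.dirac x₁ ∧ ν = Measure.dirac y₂ := by
  have hμae : ∀ᵐ x ∂μ, x ∈ Icc x₁ x₂ := ae_mem_of_msupp_subset hμ_supp
  have hνae : ∀ᵐ y ∂ν, y ∈ Icc y₁ y₂ := ae_mem_of_msupp_subset hν_supp
  have hx₁ : x₁ ∈ Icc x₁ x₂ := left_mem_Icc.mpr hx.le
  have hy₂ : y₂ ∈ Icc y₁ y₂ := right_mem_Icc.mpr hy.le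
  -- ∫ m x₁ y dν ≤ m x₁ y₂
  have hub : ∫ y, m x₁ y ∂ν ≤ m x₁ y₂ := by
    have := integral_mono_ae hν_int (integrable_const (m x₁ y₂))
      (by filter_upwards [hνae] with y hym using
        (hm_monoy x₁).monotoneOn hym hy₂ hym.2)
    simpa using this
  have hI2 : ∫ y, m x₁ y ∂ν = m x₁ y₂ := le_antisymm hub hle₂
  have hI1 : ∫ x, m x y₂ ∂μ = m x₁ y₂ := heq.trans hI2
  constructor
  · -- μ side
    have hnn : 0 ≤ᵐ[μ] fun x => m x y₂ - m x₁ y₂ := by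
      filter_upwards [hμae] with x hxm
      simpa using (hm_monox y₂).monotoneOn hx₁ hxm hxm.1
    have hint : Integrable (fun x => m x y₂ - m x₁ y₂) μ :=
      hμ_int.sub (integrable_const _)
    have hz : ∫ x, (m x y₂ - m x₁ y₂) ∂μ = 0 := by
      rw [integral_sub hμ_int (integrable_const _), hI1]
      simp
    have := (integral_eq_zero_iff_of_nonneg_ae hnn hint).mp hz
    apply prob_eq_dirac μ hμ
    filter_upwards [hμae, this] with x hxm hxe
    have : m x y₂ = m x₁ y₂ := by
      have : m x y₂ - m x₁ y₂ = 0 := hxe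
      linarith
    exact (hm_monox y₂).injOn hxm hx₁ this
  · -- ν side
    have hnn : 0 ≤ᵐ[ν] fun y => m x₁ y₂ - m x₁ y := by
      filter_upwards [hνae] with y hyn
      simpa using (hm_monoy x₁).monotoneOn hyn hy₂ hyn.2
    have hint : Integrable (fun y => m x₁ y₂ - m x₁ y) ν :=
      (integrable_const _).sub hν_int
    have hz : ∫ y, (m x₁ y₂ - m x₁ y) ∂ν = 0 := by
      rw [integral_sub (integrable_const _) hν_int, hI2]
      simp
    have := (integral_eq_zero_iff_of_nonneg_ae hnn hint).mp hz
    apply prob_eq_dirac ν hν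
    filter_upwards [hνae, this] with y hyn hye
    have : m x₁ y = m x₁ y₂ := by
      have : m x₁ y₂ - m x₁ y = 0 := hye
      linarith
    exact (hm_monoy x₁).injOn hyn hy₂ this
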